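/- The operator Y factorizes through X on the basis φ_n: for every integer n ≥ 1 and every integer x, (Y φ_n(·;α))(x) = (X g)(x), where g : ℤ → ℝ is the function g = n(N − β − n) · φ_n(·;α) + n(n − N − 1) · φ_{n−1}(·;α). -/

import Mathlib

/-- Pochhammer symbol `(a)_k = a (a+1) ⋯ (a+k-1)`, with `(a)_0 = 1`. -/
noncomputable def poch (a : ℝ) (k : ℕ) : ℝ := ∏ i ∈ Finset.range k, (a + (i : ℝ))

/-- Basis functions `φ_n(x;α) = (-x)_n / (α-x)_n`. -/
noncomputable def phi (α : ℝ) (n : ℕ) (x : ℤ) : ℝ :=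
  poch (-(x : ℝ)) n / poch (α - (x : ℝ)) n

/-- The difference operator `X`: `(X f)(x) = (x-α) f(x) - x f(x-1)`. -/
noncomputable def Xop (α : ℝ) (f : ℤ → ℝ) (x : ℤ) : ℝ :=
  ((x : ℝ) - α) * f x - (x : ℝ) * f (x - 1)

/-- Coefficients of the difference operator `Y`. -/
noncomputable def A1 (α β : ℝ) (N : ℕ) (x : ℝ) : ℝ := (x - α) * (x - (N : ℝ)) * (x + 1 - α)
noncomputable def A2 (α β : ℝ) (N : ℕ) (x : ℝ) : ℝ := x * (x - α) * (x + β - α - (N : ℝ))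
noncomputable def A0 (α β : ℝ) (N : ℕ) (x : ℝ) : ℝ :=
  (x - α) * (-2 * x ^ 2 + (2 * α - 1 + 2 * (N : ℝ) - β) * x - (N : ℝ) * (α - 1))

/-- The difference operator `Y`: `(Y f)(x) = A₁(x) f(x+1) + A₂(x) f(x-1) + A₀(x) f(x)`. -/
noncomputable def Yop (α β : ℝ) (N : ℕ) (f : ℤ → ℝ) (x : ℤ) : ℝ :=
  A1 α β N (x : ℝ) * f (x + 1) + A2 α β N (x : ℝ) * f (x - 1) + A0 α β N (x : ℝ) * f x

/-!
Write `φ_k` for `phi α k`. Peeling off the first factor of both Pochhammer symbols gives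
`(α - x) φ_{k+1}(x) = -x φ_k(x - 1)`, so both operators send the shifted values `φ_n(x ± 1)` to
multiples of `φ_{n-1}(x)`, `φ_n(x)`, `φ_{n+1}(x)`: after dividing by `x - α`, `Y φ_n - X g` is a
three-term combination of these. Peeling off the last factor instead gives
`φ_{k+1}(x) = (k - x) / (α - x + k) φ_k(x)`, which turns that combination into `φ_{n-1}(x)` times a
rational function of `x` that vanishes identically.
-/

lemma poch_succ (c : ℝ) (k : ℕ) : poch c (k + 1) = poch c k * (c + k) :=
  Finset.prod_range_succ _ _

lemma poch_succ' (c : ℝ) (k : ℕ) : poch c (k + 1) = c * poch (c + 1) k := by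
  rw [poch, Finset.prod_range_succ', mul_comm, poch]
  push_cast
  simp only [add_zero, add_assoc, add_comm (1 : ℝ)]

section phi

variable {α : ℝ} (hα : ∀ m : ℤ, α ≠ m)
include hα

lemma sub_intCast_ne_zero (x : ℤ) : α - x ≠ 0 :=
  sub_ne_zero.mpr (hα x)

lemma sub_intCast_add_natCast_ne_zero (x : ℤ) (k : ℕ) : α - x + k ≠ 0 := by
  simpa [sub_add] using sub_intCast_ne_zero hα (x - k)

lemma poch_sub_intCast_ne_zero (x : ℤ) (k : ℕ) : poch (α - x) k ≠ 0 :=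
  Finset.prod_ne_zero_iff.mpr fun i _ => sub_intCast_add_natCast_ne_zero hα x i

lemma phi_succ (k : ℕ) (x : ℤ) :
    phi α (k + 1) x = (k - x) / (α - x + k) * phi α k x := by
  have := poch_sub_intCast_ne_zero hα x k
  have := sub_intCast_add_natCast_ne_zero hα x k
  rw [phi, phi, poch_succ, poch_succ]
  field_simp
  ring

lemma sub_mul_phi_succ (k : ℕ) (x : ℤ) :
    (α - x) * phi α (k + 1) x = -x * phi α k (x - 1) := by
  have := poch_sub_intCast_ne_zero hα (x - 1) k
  have := sub_intCast_ne_zero hα x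
  rw [phi, phi, poch_succ', poch_succ']
  push_cast
  rw [show -(x : ℝ) + 1 = -(x - 1) by ring, show α - x + 1 = α - (x - 1) by ring]
  field_simp

lemma Xop_phi (k : ℕ) (x : ℤ) :
    Xop α (phi α k) x = (x - α) * (phi α k x - phi α (k + 1) x) := by
  rw [Xop]
  linear_combination -sub_mul_phi_succ hα k x

lemma Yop_phi (β : ℝ) (N : ℕ) (k : ℕ) (x : ℤ) :
    Yop α β N (phi α (k + 1)) x = (x - α) *
      ((x - N) * (x + 1) * phi α k x + (x + β - α - N) * (x - α) * phi α (k + 2) x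
        + (-2 * x ^ 2 + (2 * α - 1 + 2 * N - β) * x - N * (α - 1)) * phi α (k + 1) x) := by
  have up := sub_mul_phi_succ hα k (x + 1)
  have down : (α - x) * phi α (k + 2) x = _ := sub_mul_phi_succ hα (k + 1) x
  rw [add_sub_cancel_right] at up
  push_cast at up
  rw [Yop, A1, A2, A0]
  linear_combination -(x - α) * (x - N) * up + (x - α) * (x + β - α - N) * down

lemma phi_three_term (β N : ℝ) (k : ℕ) (x : ℤ) :
    ((x - N) * (x + 1) - (k + 1) * (k - N)) * phi α k x
      + ((x + β - α - N) * (x - α) + (k + 1) * (N - β - (k + 1))) * phi α (k + 2) x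
      + (-2 * x ^ 2 + (2 * α - 1 + 2 * N - β) * x - N * (α - 1)
          - (k + 1) * (N - β - (k + 1)) + (k + 1) * (k - N)) * phi α (k + 1) x = 0 := by
  have := sub_intCast_add_natCast_ne_zero hα x k
  have := sub_intCast_add_natCast_ne_zero hα x (k + 1)
  rw [phi_succ hα (k + 1), phi_succ hα k]
  push_cast at *
  field_simp
  ring

end phi

theorem statement3_general (N : ℕ) (α β : ℝ) (hα : ∀ m : ℤ, α ≠ (m : ℝ))
    (n : ℕ) (hn : 1 ≤ n) (x : ℤ)
    (g : ℤ → ℝ)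
    (hg : g = fun y => (n : ℝ) * ((N : ℝ) - β - (n : ℝ)) * phi α n y
      + (n : ℝ) * ((n : ℝ) - (N : ℝ) - 1) * phi α (n - 1) y) :
    Yop α β N (phi α n) x = Xop α g x := by
  obtain ⟨k, rfl⟩ : ∃ k, n = k + 1 := ⟨n - 1, by omega⟩
  have hX : Xop α g x = ((k + 1 : ℕ) : ℝ) * (N - β - (k + 1 : ℕ)) * Xop α (phi α (k + 1)) x
      + ((k + 1 : ℕ) : ℝ) * ((k + 1 : ℕ) - N - 1) * Xop α (phi α k) x := by
    simp only [Xop, hg, Nat.add_sub_cancel]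
    ring
  rw [hX, Yop_phi hα, Xop_phi hα, Xop_phi hα]
  push_cast
  linear_combination (x - α) * phi_three_term hα β N k x

theorem statement3 (N : ℕ) (hN : 0 < N) (α β : ℝ) (hα : ∀ m : ℤ, α ≠ (m : ℝ))
    (n : ℕ) (hn : 1 ≤ n) (x : ℤ)
    (g : ℤ → ℝ)
    (hg : g = fun y => (n : ℝ) * ((N : ℝ) - β - (n : ℝ)) * phi α n y
      + (n : ℝ) * ((n : ℝ) - (N : ℝ) - 1) * phi α (n - 1) y) :
    Yop α β N (phi α n) x = Xop α g x :=
  statement3_general N α β hα n hn x g hg
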